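/- arXiv:2309.17119 — 3 statements merged into one kernel-verified Lean document; each statement's English description precedes it below -/
import Mathlib

section
/- Let s ∈ (0,1), ρ > 0, a ∈ ℝⁿ with first coordinate a₁ ∈ (0, ρ/2], and let a⋆ = a - 2a₁e₁ be the reflection of a across {x₁ = 0}. Define B := B_ρ(a), B⋆ := B_ρ(a⋆), and B̃ := B_{√(ρ² - a₁²)}((a + a⋆)/2). Then for every x in B⋆ with x₁ > 0, one has (ρ² - |x - a|²)₊^s + (ρ² - |x - a⋆|²)₊^s ≤ 2(ρ² - a₁² - |x - (a+a⋆)/2|²)₊^s. -/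
lemma key_concave_ineq (s D t : ℝ) (hs : 0 < s) (hs1 : s < 1) (ht : 0 ≤ t)
    (hDt : 0 ≤ D - t) :
    (D + t) ^ s + (D - t) ^ s ≤ 2 * D ^ s := by
  have hcc := (Real.strictConcaveOn_rpow hs hs1).concaveOn
  have h := hcc.2 (show D + t ∈ Set.Ici (0:ℝ) by simp only [Set.mem_Ici]; linarith)
    (show D - t ∈ Set.Ici (0:ℝ) by simpa using hDt)
    (by norm_num : (0:ℝ) ≤ 1/2) (by norm_num : (0:ℝ) ≤ 1/2)
    (by norm_num : (1/2:ℝ) + 1/2 = 1)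
  have hmid : (1/2 : ℝ) • (D + t) + (1/2 : ℝ) • (D - t) = D := by
    simp only [smul_eq_mul]; ring
  rw [hmid] at h
  simp only [smul_eq_mul] at h
  linarith

theorem torsion_ball_reflection_pointwise_ineq
    {n : ℕ} (hn : 0 < n) (s ρ : ℝ) (hs : s ∈ Set.Ioo (0:ℝ) 1) (hρ : 0 < ρ)
    (a : EuclideanSpace ℝ (Fin n))
    (ha : a ⟨0, hn⟩ ∈ Set.Ioc 0 (ρ/2))
    (astar : EuclideanSpace ℝ (Fin n))
    (hastar : astar = a - (2 * a ⟨0, hn⟩) • EuclideanSpace.single ⟨0, hn⟩ (1:ℝ))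
    (x : EuclideanSpace ℝ (Fin n))
    (hx : x ∈ Metric.ball astar ρ) (hx1 : 0 < x ⟨0, hn⟩) :
    max (ρ^2 - ‖x - a‖^2) 0 ^ s + max (ρ^2 - ‖x - astar‖^2) 0 ^ s
      ≤ 2 * max (ρ^2 - (a ⟨0, hn⟩)^2 - ‖x - ((1:ℝ)/2) • (a + astar)‖^2) 0 ^ s := by
  set a1 : ℝ := a ⟨0, hn⟩ with ha1
  set X1 : ℝ := x ⟨0, hn⟩ with hX1
  set e : EuclideanSpace ℝ (Fin n) := EuclideanSpace.single ⟨0, hn⟩ (1:ℝ) with he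
  set u : EuclideanSpace ℝ (Fin n) := x - a with hu
  have hnorm : ∀ r : ℝ, ‖u + r • e‖^2 = ‖u‖^2 + 2 * (r * (X1 - a1)) + r^2 := by
    intro r
    rw [norm_add_sq_real]
    have h1 : (inner ℝ u (r • e) : ℝ) = r * (X1 - a1) := by
      rw [real_inner_smul_right, he, EuclideanSpace.inner_single_right]
      have : u ⟨0, hn⟩ = X1 - a1 := by simp [hu, hX1, ha1]
      simp [this]
    rw [h1]
    have h2 : ‖r • e‖ = |r| := by
      rw [norm_smul, he, EuclideanSpace.norm_single]; simp
    rw [h2, sq_abs]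
  -- rewrite the two shifted points
  have hxa : x - astar = u + (2 * a1) • e := by
    rw [hastar, hu]; abel
  have hxc : x - ((1:ℝ)/2) • (a + astar) = u + a1 • e := by
    rw [hastar, hu]
    module
  have hB : ‖x - astar‖^2 = ‖u‖^2 + 4 * a1 * X1 - 4 * a1 * a1 + 4 * a1^2 := by
    rw [hxa, hnorm]; ring
  have hC : ‖x - ((1:ℝ)/2) • (a + astar)‖^2 = ‖u‖^2 + 2 * a1 * X1 - 2 * a1 * a1 + a1^2 := by
    rw [hxc, hnorm]; ring
  set A : ℝ := ρ^2 - ‖u‖^2 with hA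
  set t : ℝ := 2 * a1 * X1 with htdef
  have ht : 0 < t := by
    have := ha.1
    have := hx1
    positivity
  have hball : A - 2 * t > 0 := by
    rw [Metric.mem_ball, dist_eq_norm] at hx
    have h2 : ‖x - astar‖^2 < ρ^2 := by
      have := sq_lt_sq' (by linarith [norm_nonneg (x - astar)] : -ρ < ‖x - astar‖) hx
      linarith
    rw [hB] at h2
    simp only [hA, htdef]
    nlinarith
  have e2 : ρ^2 - ‖x - astar‖^2 = A - 2 * t := by rw [hB, hA, htdef]; ring
  have e3 : ρ^2 - a1^2 - ‖x - ((1:ℝ)/2) • (a + astar)‖^2 = A - t := by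
    rw [hC, hA, htdef]; ring
  rw [e2, e3]
  rw [max_eq_left (by linarith : (0:ℝ) ≤ A), max_eq_left (by linarith : (0:ℝ) ≤ A - 2*t),
    max_eq_left (by linarith : (0:ℝ) ≤ A - t)]
  have := key_concave_ineq s (A - t) t hs.1 hs.2 ht.le (by linarith)
  have hAe : A - t + t = A := by ring
  have hAe2 : A - t - t = A - 2 * t := by ring
  rw [hAe, hAe2] at this
  exact this
end

section
/- Let n ≥ 1, s ∈ (0,1). For x on the unit sphere in ℝⁿ, the integral ∫_{B₁} (1 - |y|²)^s / |x - y|^{n+2s} dy diverges to +∞. -/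
open MeasureTheory
open scoped ENNReal

theorem boundary_integral_diverges
    {n : ℕ} (hn : 1 ≤ n) (s : ℝ) (hs : s ∈ Set.Ioo (0:ℝ) 1)
    (x : EuclideanSpace ℝ (Fin n)) (hx : ‖x‖ = 1) :
    ∫⁻ y in Metric.ball (0 : EuclideanSpace ℝ (Fin n)) 1,
        ENNReal.ofReal ((1 - ‖y‖^2) ^ s / ‖x - y‖ ^ ((n : ℝ) + 2*s)) = ⊤ := by
  obtain ⟨hs0, hs1⟩ := hs
  haveI : Nontrivial (EuclideanSpace ℝ (Fin n)) :=
    nontrivial_of_ne x 0 (by intro h; rw [h] at hx; simp at hx)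
  set f : EuclideanSpace ℝ (Fin n) → ℝ≥0∞ :=
    fun y => ENNReal.ofReal ((1 - ‖y‖^2) ^ s / ‖x - y‖ ^ ((n : ℝ) + 2*s)) with hf
  set V : ℝ≥0∞ := volume (Metric.ball (0 : EuclideanSpace ℝ (Fin n)) 1) with hV
  have hVpos : 0 < V := Metric.measure_ball_pos _ _ one_pos
  set I : ℝ≥0∞ := ∫⁻ y in Metric.ball (0 : EuclideanSpace ℝ (Fin n)) 1, f y with hI
  have h2 : (0:ℝ) < 2 := two_pos
  set C : ℝ := (2:ℝ) ^ (-(3*(n:ℝ) + 4*s)) with hC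
  have hCpos : 0 < C := Real.rpow_pos_of_pos h2 _
  have key : ∀ k : ℕ, ENNReal.ofReal (C * ((2:ℝ)^s)^k) * V ≤ I := by
    intro k
    set ε : ℝ := (2:ℝ) ^ (-(k:ℝ)) with hε
    have hεpos : 0 < ε := Real.rpow_pos_of_pos h2 _
    have hε1 : ε ≤ 1 := Real.rpow_le_one_of_one_le_of_nonpos one_le_two (neg_nonpos.mpr (Nat.cast_nonneg k))
    set c : EuclideanSpace ℝ (Fin n) := (1 - ε) • x with hc
    set ρ : ℝ := ε / 4 with hρ
    have hρpos : 0 < ρ := by positivity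
    have hnc : ‖c‖ = 1 - ε := by
      rw [hc, norm_smul, hx, mul_one, Real.norm_eq_abs, abs_of_nonneg (by linarith)]
    have hxc : ‖x - c‖ = ε := by
      have : x - c = ε • x := by rw [hc]; module
      rw [this, norm_smul, hx, mul_one, Real.norm_eq_abs, abs_of_nonneg hεpos.le]
    -- bounds on the small ball
    have hyb : ∀ y ∈ Metric.ball c ρ, ‖y‖ ≤ 1 - (3/4)*ε ∧ ‖x - y‖ ≤ 2*ε ∧ ρ ≤ ‖x - y‖ := by
      intro y hy
      rw [Metric.mem_ball, dist_eq_norm] at hy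
      have h1 : ‖y‖ ≤ ‖c‖ + ‖y - c‖ := by
        calc ‖y‖ = ‖c + (y - c)‖ := by rw [add_sub_cancel]
        _ ≤ ‖c‖ + ‖y - c‖ := norm_add_le _ _
      have h2' : ‖x - y‖ ≤ ‖x - c‖ + ‖c - y‖ := by
        calc ‖x - y‖ = ‖(x - c) + (c - y)‖ := by rw [sub_add_sub_cancel]
        _ ≤ ‖x - c‖ + ‖c - y‖ := norm_add_le _ _
      have h3 : ‖x - c‖ ≤ ‖x - y‖ + ‖y - c‖ := by
        calc ‖x - c‖ = ‖(x - y) + (y - c)‖ := by rw [sub_add_sub_cancel]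
        _ ≤ ‖x - y‖ + ‖y - c‖ := norm_add_le _ _
      have hcy : ‖c - y‖ = ‖y - c‖ := norm_sub_rev _ _
      refine ⟨by rw [hnc] at h1; linarith [hy], ?_, ?_⟩
      · rw [hxc] at h2'; rw [hcy] at h2'; linarith
      · rw [hxc] at h3; linarith
    have hsub : Metric.ball c ρ ⊆ Metric.ball (0 : EuclideanSpace ℝ (Fin n)) 1 := by
      intro y hy
      rw [Metric.mem_ball, dist_zero_right]
      have := (hyb y hy).1
      linarith
    set L : ℝ := (ε/4) ^ s / (2*ε) ^ ((n:ℝ) + 2*s) with hL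
    have hpt : ∀ y ∈ Metric.ball c ρ, ENNReal.ofReal L ≤ f y := by
      intro y hy
      obtain ⟨hy1, hy2, hy3⟩ := hyb y hy
      have hxypos : 0 < ‖x - y‖ := lt_of_lt_of_le hρpos hy3
      apply ENNReal.ofReal_le_ofReal
      have hnum : (ε/4) ^ s ≤ (1 - ‖y‖^2) ^ s := by
        apply Real.rpow_le_rpow (by positivity) _ hs0.le
        nlinarith [norm_nonneg y]
      have hden : ‖x - y‖ ^ ((n:ℝ) + 2*s) ≤ (2*ε) ^ ((n:ℝ) + 2*s) :=
        Real.rpow_le_rpow (norm_nonneg _) hy2 (by positivity)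
      have hdenpos : 0 < ‖x - y‖ ^ ((n:ℝ) + 2*s) := Real.rpow_pos_of_pos hxypos _
      rw [hL]
      exact div_le_div₀ (Real.rpow_nonneg (by nlinarith [norm_nonneg y, hy1]) s) hnum hdenpos hden
    have hvol : volume (Metric.ball c ρ) = ENNReal.ofReal (ρ ^ n) * V := by
      rw [Measure.addHaar_ball volume c hρpos.le, finrank_euclideanSpace_fin]
    -- the numerical identity
    have hid : L * ρ ^ n = C * ((2:ℝ)^s)^k := by
      have h4 : (2:ℝ) ^ ((2:ℕ):ℝ) = 4 := by rw [Real.rpow_natCast]; norm_num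
      have e1 : ε / 4 = (2:ℝ) ^ (-(k:ℝ) - 2) := by
        rw [hε, show (-(k:ℝ) - 2) = (-(k:ℝ)) - ((2:ℕ):ℝ) from by norm_num,
          Real.rpow_sub h2, h4]
      have e2 : 2 * ε = (2:ℝ) ^ (1 - (k:ℝ)) := by
        rw [hε, Real.rpow_sub h2, Real.rpow_one, Real.rpow_neg h2.le, Real.rpow_natCast]
        ring
      rw [hL, hρ, e1, e2, hC,
        ← Real.rpow_natCast ((2:ℝ) ^ (-(k:ℝ) - 2)) n,
        ← Real.rpow_mul h2.le, ← Real.rpow_mul h2.le, ← Real.rpow_mul h2.le,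
        ← Real.rpow_natCast ((2:ℝ) ^ s) k, ← Real.rpow_mul h2.le,
        ← Real.rpow_sub h2, ← Real.rpow_add h2, ← Real.rpow_add h2]
      congr 1
      ring
    calc ENNReal.ofReal (C * ((2:ℝ)^s)^k) * V
        = ENNReal.ofReal L * (ENNReal.ofReal (ρ ^ n) * V) := by
          rw [← mul_assoc, ← ENNReal.ofReal_mul (by rw [hL]; positivity), hid]
      _ = ENNReal.ofReal L * volume (Metric.ball c ρ) := by rw [hvol]
      _ = ∫⁻ _ in Metric.ball c ρ, ENNReal.ofReal L := by rw [setLIntegral_const]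
      _ ≤ ∫⁻ y in Metric.ball c ρ, f y :=
          lintegral_mono_ae (ae_restrict_of_forall_mem measurableSet_ball hpt)
      _ ≤ I := lintegral_mono_set hsub
  -- conclude divergence
  have h21 : 1 < (2:ℝ) ^ s := (Real.one_lt_rpow_iff_of_pos h2).mpr (Or.inl ⟨one_lt_two, hs0⟩)
  have htr : Filter.Tendsto (fun k : ℕ => C * ((2:ℝ)^s)^k) Filter.atTop Filter.atTop :=
    Filter.Tendsto.const_mul_atTop hCpos (tendsto_pow_atTop_atTop_of_one_lt h21)
  have ht : Filter.Tendsto (fun k : ℕ => ENNReal.ofReal (C * ((2:ℝ)^s)^k) * V)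
      Filter.atTop (nhds (⊤ * V)) :=
    ENNReal.Tendsto.mul_const (ENNReal.tendsto_ofReal_atTop.comp htr) (Or.inl (by simp))
  rw [ENNReal.top_mul hVpos.ne'] at ht
  exact top_le_iff.mp (le_of_tendsto' ht key)
end

section
/- Let s ∈ (0,1), n ≥ 1, a_{n,s} = sΓ(n/2)/(Γ((n+2s)/2+1)Γ(1-s)), K(τ) = a_{n,s}(1-τ)^{-s} τ^{(n+2s)/2}, and F(τ) = ₂F₁(1, n/2; (n+2s)/2+1; τ). Then for every τ ∈ (0,1), one has g(τ) := K(τ)((n+2s)/(2s) - F(τ)) - 1 ≤ 0. -/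
open MeasureTheory Real Set

lemma gamma_shift {x : ℝ} (hx : 0 < x) (k : ℕ) :
    Real.Gamma (x + k) = Real.Gamma x * (ascPochhammer ℝ k).eval x := by
  induction k with
  | zero => simp
  | succ m ih =>
      have hne : x + m ≠ 0 := by positivity
      have : x + (m+1 : ℕ) = (x + m) + 1 := by push_cast; ring
      rw [this, Real.Gamma_add_one hne, ih, ascPochhammer_succ_right]
      simp [Polynomial.eval_mul]
      ring

lemma cpow_eq_ofReal_on_Ioc {u v : ℝ} {t : ℝ} (ht : t ∈ Ioc (0:ℝ) 1) :
    (t:ℂ) ^ ((u:ℂ) - 1) * (1 - (t:ℂ)) ^ ((v:ℂ) - 1)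
      = ((t ^ (u-1) * (1-t) ^ (v-1) : ℝ) : ℂ) := by
  have h1 : ((t:ℝ) : ℂ) ^ ((u:ℂ)-1) = ((t ^ (u-1) : ℝ) : ℂ) := by
    rw [show ((u:ℂ)-1) = ((u-1:ℝ):ℂ) by push_cast; ring, ← Complex.ofReal_cpow ht.1.le]
  have h2 : (1 - (t:ℂ)) ^ ((v:ℂ)-1) = (((1-t) ^ (v-1) : ℝ) : ℂ) := by
    rw [show (1 - (t:ℂ)) = (((1-t : ℝ)):ℂ) by push_cast; ring,
      show ((v:ℂ)-1) = ((v-1:ℝ):ℂ) by push_cast; ring,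
      ← Complex.ofReal_cpow (by linarith [ht.2])]
  rw [h1, h2, ← Complex.ofReal_mul]

lemma betaInt_integrableOn {u v : ℝ} (hu : 0 < u) (hv : 0 < v) :
    IntegrableOn (fun t : ℝ => t ^ (u-1) * (1-t) ^ (v-1)) (Ioo (0:ℝ) 1) := by
  have hc := Complex.betaIntegral_convergent (u := u) (v := v) (by simpa) (by simpa)
  rw [intervalIntegrable_iff_integrableOn_Ioc_of_le zero_le_one] at hc
  have hc2 : IntegrableOn (fun t : ℝ => ((t ^ (u-1) * (1-t) ^ (v-1) : ℝ) : ℂ))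
      (Ioc (0:ℝ) 1) := by
    refine hc.congr_fun (fun t ht => ?_) measurableSet_Ioc
    exact cpow_eq_ofReal_on_Ioc ht
  have h3 : IntegrableOn
      (fun t : ℝ => ((((t ^ (u-1) * (1-t) ^ (v-1) : ℝ) : ℂ)).re)) (Ioo (0:ℝ) 1) :=
    (hc2.mono_set Ioo_subset_Ioc_self).re
  refine h3.congr_fun (fun t _ => by simp) measurableSet_Ioo

lemma betaInt_eq {u v : ℝ} (hu : 0 < u) (hv : 0 < v) :
    ∫ t in Ioo (0:ℝ) 1, t ^ (u-1) * (1-t) ^ (v-1)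
      = Real.Gamma u * Real.Gamma v / Real.Gamma (u+v) := by
  have key := Complex.Gamma_mul_Gamma_eq_betaIntegral
    (s := (u:ℂ)) (t := (v:ℂ)) (by simpa) (by simpa)
  have hbeta : Complex.betaIntegral u v
      = ((∫ t in Ioo (0:ℝ) 1, t ^ (u-1) * (1-t) ^ (v-1) : ℝ) : ℂ) := by
    calc Complex.betaIntegral u v
        = ∫ t in Ioc (0:ℝ) 1, ((t ^ (u-1) * (1-t) ^ (v-1) : ℝ) : ℂ) := by
          rw [Complex.betaIntegral, intervalIntegral.integral_of_le zero_le_one]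
          exact setIntegral_congr_fun measurableSet_Ioc (fun t ht => cpow_eq_ofReal_on_Ioc ht)
      _ = ((∫ t in Ioc (0:ℝ) 1, t ^ (u-1) * (1-t) ^ (v-1) : ℝ) : ℂ) := integral_ofReal
      _ = _ := by rw [MeasureTheory.integral_Ioc_eq_integral_Ioo]
  rw [hbeta, ← Complex.ofReal_add, Complex.Gamma_ofReal, Complex.Gamma_ofReal,
    Complex.Gamma_ofReal, ← Complex.ofReal_mul, ← Complex.ofReal_mul] at key
  have h2 := Complex.ofReal_inj.mp key
  have hG : Real.Gamma (u+v) ≠ 0 := (Real.Gamma_pos_of_pos (by linarith)).ne'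
  field_simp
  linarith [h2]

lemma lint_exp {a : ℝ} (ha : 0 < a) :
    ∫⁻ y in Ioi (0:ℝ), ENNReal.ofReal (Real.exp (-(a*y))) = ENNReal.ofReal (1/a) := by
  have hint : IntegrableOn (fun y : ℝ => Real.exp (-(a*y))) (Ioi (0:ℝ)) := by
    have := exp_neg_integrableOn_Ioi 0 ha
    refine this.congr_fun (fun y _ => by ring_nf) measurableSet_Ioi
  rw [← ofReal_integral_eq_lintegral_ofReal hint
    (ae_of_all _ (fun y => (Real.exp_pos _).le))]
  congr 1
  have := Real.integral_rpow_mul_exp_neg_mul_Ioi (a := 1) (r := a) one_pos ha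
  simpa [Real.Gamma_one] using this

lemma lint_gamma {p r : ℝ} (hp : 0 < p) (hr : 0 < r) :
    ∫⁻ u in Ioi (0:ℝ), ENNReal.ofReal (u ^ (p-1) * Real.exp (-(r*u)))
      = ENNReal.ofReal ((1/r) ^ p * Real.Gamma p) := by
  have hint : IntegrableOn (fun u : ℝ => u ^ (p-1) * Real.exp (-(r*u))) (Ioi (0:ℝ)) := by
    have h0 := integrableOn_rpow_mul_exp_neg_mul_rpow
      (show (-1:ℝ) < p-1 by linarith) (one_pos : (0:ℝ) < 1) hr
    refine h0.congr_fun (fun u hu => ?_) measurableSet_Ioi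
    dsimp only; rw [Real.rpow_one, neg_mul]
  rw [← ofReal_integral_eq_lintegral_ofReal hint
    ((ae_restrict_iff' measurableSet_Ioi).mpr (ae_of_all _ (fun u hu => by
      have : (0:ℝ) < u := hu; positivity)))]
  congr 1
  exact Real.integral_rpow_mul_exp_neg_mul_Ioi hp hr

lemma lintA {s c r : ℝ} (hs0 : 0 < s) (hs1 : s < 1) (hc : 0 < c) (hr : 0 < r) :
    ∫⁻ u in Ioi (0:ℝ), ENNReal.ofReal (u ^ (s-1) / (c + r*u))
      = ENNReal.ofReal (Real.Gamma s * Real.Gamma (1-s) * c ^ (s-1) * r ^ (-s)) := by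
  have hm : Measurable (Function.uncurry
      fun u y : ℝ => ENNReal.ofReal (u ^ (s-1) * Real.exp (-((c+r*u)*y)))) := by
    apply Measurable.ennreal_ofReal
    fun_prop
  have step1 : ∀ u ∈ Ioi (0:ℝ),
      ENNReal.ofReal (u ^ (s-1) / (c + r*u))
        = ∫⁻ y in Ioi (0:ℝ), ENNReal.ofReal (u ^ (s-1) * Real.exp (-((c+r*u)*y))) := by
    intro u hu
    have hu0 : (0:ℝ) < u := hu
    have hcu : 0 < c + r*u := by positivity
    have : ∀ y : ℝ, ENNReal.ofReal (u ^ (s-1) * Real.exp (-((c+r*u)*y)))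
        = ENNReal.ofReal (u ^ (s-1)) * ENNReal.ofReal (Real.exp (-((c+r*u)*y))) := by
      intro y; rw [ENNReal.ofReal_mul (by positivity)]
    simp_rw [this]
    rw [lintegral_const_mul' _ _ ENNReal.ofReal_ne_top, lint_exp hcu,
      ← ENNReal.ofReal_mul (by positivity)]
    rw [mul_one_div]
  rw [setLIntegral_congr_fun measurableSet_Ioi step1]
  rw [lintegral_lintegral_swap hm.aemeasurable]
  have step3 : ∀ y ∈ Ioi (0:ℝ),
      (∫⁻ u in Ioi (0:ℝ), ENNReal.ofReal (u ^ (s-1) * Real.exp (-((c+r*u)*y))))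
        = ENNReal.ofReal ((Real.Gamma s * (1/r)^s) * (y ^ ((1-s)-1) * Real.exp (-(c*y)))) := by
    intro y hy
    have hy0 : (0:ℝ) < y := hy
    have h1 : ∀ u ∈ Ioi (0:ℝ),
        ENNReal.ofReal (u ^ (s-1) * Real.exp (-((c+r*u)*y)))
          = ENNReal.ofReal (Real.exp (-(c*y))) * ENNReal.ofReal (u ^ (s-1) * Real.exp (-((r*y)*u))) := by
      intro u hu
      rw [← ENNReal.ofReal_mul (Real.exp_pos _).le]
      congr 1
      rw [show -((c+r*u)*y) = (-(c*y)) + (-((r*y)*u)) by ring, Real.exp_add]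
      ring
    rw [setLIntegral_congr_fun measurableSet_Ioi h1,
      lintegral_const_mul' _ _ ENNReal.ofReal_ne_top,
      lint_gamma hs0 (by positivity), ← ENNReal.ofReal_mul (Real.exp_pos _).le]
    congr 1
    have hys : (1/(r*y)) ^ s = (1/r)^s * y ^ (-s) := by
      rw [show (1/(r*y)) = (1/r) * (1/y) by field_simp,
        Real.mul_rpow (by positivity) (by positivity), one_div y, Real.inv_rpow hy0.le,
        ← Real.rpow_neg hy0.le]
    rw [hys]
    rw [show (1-s)-1 = -s by ring]
    ring
  rw [setLIntegral_congr_fun measurableSet_Ioi step3]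
  have h4 : ∀ y : ℝ, ENNReal.ofReal ((Real.Gamma s * (1/r)^s) * (y ^ ((1-s)-1) * Real.exp (-(c*y))))
      = ENNReal.ofReal (Real.Gamma s * (1/r)^s) * ENNReal.ofReal (y ^ ((1-s)-1) * Real.exp (-(c*y))) := by
    intro y
    rw [ENNReal.ofReal_mul (by positivity)]
  simp_rw [h4]
  rw [lintegral_const_mul' _ _ ENNReal.ofReal_ne_top, lint_gamma (by linarith) hc,
    ← ENNReal.ofReal_mul (by positivity)]
  congr 1
  rw [one_div r, one_div c, Real.inv_rpow hr.le, Real.inv_rpow hc.le,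
    ← Real.rpow_neg hr.le, ← Real.rpow_neg hc.le, show -(1-s) = s-1 by ring]
  ring

lemma lint_reflect (g : ℝ → ENNReal) :
    ∫⁻ t in Ioo (0:ℝ) 1, g (1-t) = ∫⁻ u in Ioo (0:ℝ) 1, g u := by
  have mp : MeasurePreserving (fun t : ℝ => 1 - t) volume volume := by
    have h := (measurePreserving_add_left (volume : Measure ℝ) 1).comp
      (Measure.measurePreserving_neg (volume : Measure ℝ))
    simpa [Function.comp_def, sub_eq_add_neg] using h
  have me : MeasurableEmbedding (fun t : ℝ => 1 - t) :=
    (MeasurableEquiv.subLeft (1:ℝ)).measurableEmbedding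
  have h := mp.setLIntegral_comp_emb me g (Ioo 0 1)
  rwa [Set.image_const_sub_Ioo, sub_self, sub_zero] at h


set_option maxHeartbeats 1000000 in
theorem g_le_zero
    (n : ℕ) (hn : 1 ≤ n) (s : ℝ) (hs : s ∈ Set.Ioo (0:ℝ) 1)
    (τ : ℝ) (hτ : τ ∈ Set.Ioo (0:ℝ) 1)
    (a : ℝ)
    (ha : a = s * Real.Gamma ((n : ℝ)/2)
        / (Real.Gamma (((n : ℝ) + 2*s)/2 + 1) * Real.Gamma (1 - s)))
    (K : ℝ) (hK : K = a * (1 - τ) ^ (-s) * τ ^ (((n : ℝ) + 2*s)/2))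
    (F : ℝ)
    (hF : F = ∑' k : ℕ,
        (ascPochhammer ℝ k).eval 1 * (ascPochhammer ℝ k).eval ((n : ℝ)/2) * τ ^ k
          / ((ascPochhammer ℝ k).eval (((n : ℝ) + 2*s)/2 + 1) * (k.factorial : ℝ))) :
    K * (((n : ℝ) + 2*s)/(2*s) - F) - 1 ≤ 0 := by
  obtain ⟨hs0, hs1⟩ := hs
  obtain ⟨hτ0, hτ1⟩ := hτ
  have hn1 : (1:ℝ) ≤ (n:ℝ) := by exact_mod_cast hn
  set x : ℝ := (n:ℝ)/2 with hxdef
  have hx0 : 0 < x := by rw [hxdef]; linarith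
  have h1τ : 0 < 1 - τ := by linarith
  have h1s : (0:ℝ) < 1 - s := by linarith
  have hb0 : 0 < x + s + 1 := by linarith
  have hbarg : ((n : ℝ) + 2*s)/2 + 1 = x + s + 1 := by rw [hxdef]; ring
  have hparg : ((n : ℝ) + 2*s)/2 = x + s := by rw [hxdef]; ring
  have hGx := Real.Gamma_pos_of_pos hx0
  have hGs := Real.Gamma_pos_of_pos hs0
  have hG1s := Real.Gamma_pos_of_pos h1s
  have hGs1 := Real.Gamma_pos_of_pos (show (0:ℝ) < s + 1 by linarith)
  have hGb := Real.Gamma_pos_of_pos hb0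
  have hGamma_s1 : Real.Gamma (s+1) = s * Real.Gamma s := Real.Gamma_add_one hs0.ne'
  -- the beta integrals I k = B(x+k, s+1)
  set I : ℕ → ℝ := fun k => ∫ t in Set.Ioo (0:ℝ) 1, t ^ (x + (k:ℝ) - 1) * (1-t) ^ s with hIdef
  have hIint : ∀ k : ℕ, MeasureTheory.IntegrableOn
      (fun t : ℝ => t ^ (x + (k:ℝ) - 1) * (1-t) ^ s) (Set.Ioo (0:ℝ) 1) := by
    intro k
    have h := betaInt_integrableOn (u := x + k) (v := s + 1) (by positivity) (by linarith)
    simpa [add_sub_cancel_right] using h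
  have hIval : ∀ k : ℕ, I k = Real.Gamma (x+k) * Real.Gamma (s+1) / Real.Gamma (x+k+s+1) := by
    intro k
    have h := betaInt_eq (u := x + k) (v := s + 1) (by positivity) (by linarith)
    simp only [add_sub_cancel_right] at h
    rw [show x+(k:ℝ)+(s+1) = x+(k:ℝ)+s+1 by ring] at h
    simpa [hIdef] using h
  have hI0 : I 0 = Real.Gamma x * Real.Gamma (s+1) / Real.Gamma (x+s+1) := by
    have h := hIval 0; simpa using h
  have hI0pos : 0 < I 0 := by rw [hI0]; positivity
  have hInonneg : ∀ k, 0 ≤ I k := fun k => by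
    rw [hIval k]
    have h1 := Real.Gamma_pos_of_pos (show (0:ℝ) < x + k by positivity)
    have h2 := Real.Gamma_pos_of_pos (show (0:ℝ) < x + k + s + 1 by positivity)
    positivity
  have hI0expr : I 0 = ∫ t in Set.Ioo (0:ℝ) 1, t ^ (x - 1) * (1-t) ^ s := by
    simp [hIdef]
  have hIint0 : MeasureTheory.IntegrableOn
      (fun t : ℝ => t ^ (x - 1) * (1-t) ^ s) (Set.Ioo (0:ℝ) 1) := by
    have h := hIint 0; simpa using h
  have hIle : ∀ k, I k ≤ I 0 := by
    intro k
    rw [hI0expr]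
    refine MeasureTheory.setIntegral_mono_on (hIint k) hIint0 measurableSet_Ioo ?_
    intro t ht
    refine mul_le_mul_of_nonneg_right ?_ (Real.rpow_nonneg (by linarith [ht.2]) s)
    refine Real.rpow_le_rpow_of_exponent_ge ht.1 ht.2.le ?_
    have : (0:ℝ) ≤ (k:ℝ) := Nat.cast_nonneg k
    linarith
  have hgeo : Summable (fun k : ℕ => τ ^ k * I 0) :=
    (summable_geometric_of_lt_one hτ0.le hτ1).mul_right _
  have hsum : Summable (fun k : ℕ => τ ^ k * I k) :=
    Summable.of_nonneg_of_le
      (fun k => mul_nonneg (pow_nonneg hτ0.le k) (hInonneg k))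
      (fun k => mul_le_mul_of_nonneg_left (hIle k) (pow_nonneg hτ0.le k)) hgeo
  have htsum_nonneg : 0 ≤ ∑' k : ℕ, τ^k * I k :=
    tsum_nonneg (fun k => mul_nonneg (pow_nonneg hτ0.le k) (hInonneg k))
  have hd : ∀ t ∈ Set.Ioo (0:ℝ) 1, 0 < 1 - τ*t := by
    intro t ht; nlinarith [ht.1, ht.2]
  -- J
  set J : ℝ := ∫ t in Set.Ioo (0:ℝ) 1, t ^ (x-1) * (1-t) ^ s / (1 - τ*t) with hJdef
  have hbig_int : MeasureTheory.IntegrableOn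
      (fun t : ℝ => t^(x-1)*(1-t)^s/(1-τ*t)) (Set.Ioo (0:ℝ) 1) := by
    refine MeasureTheory.Integrable.mono' (hIint0.const_mul (1-τ)⁻¹)
      ((by fun_prop : Measurable (fun t : ℝ => t^(x-1)*(1-t)^s/(1-τ*t))).aestronglyMeasurable)
      ((MeasureTheory.ae_restrict_iff' measurableSet_Ioo).mpr (MeasureTheory.ae_of_all _ ?_))
    intro t ht
    have ht0 := ht.1
    have ht1 := ht.2
    have hdt := hd t ht
    have hnum : 0 ≤ t^(x-1)*(1-t)^s :=
      mul_nonneg (Real.rpow_nonneg ht0.le _) (Real.rpow_nonneg (by linarith) _)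
    rw [Real.norm_eq_abs, abs_of_nonneg (div_nonneg hnum hdt.le), inv_mul_eq_div]
    gcongr <;> nlinarith [ht.1, ht.2, hτ0.le]
  have hJnn : 0 ≤ J := by
    rw [hJdef]
    refine MeasureTheory.setIntegral_nonneg measurableSet_Ioo (fun t ht => ?_)
    exact div_nonneg (mul_nonneg (Real.rpow_nonneg ht.1.le _)
      (Real.rpow_nonneg (by linarith [ht.2]) _)) (hd t ht).le
  -- pointwise geometric expansion
  have hpoint : ∀ t ∈ Set.Ioo (0:ℝ) 1,
      ENNReal.ofReal (t^(x-1)*(1-t)^s/(1-τ*t))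
        = ∑' k : ℕ, ENNReal.ofReal (τ^k * (t^(x+(k:ℝ)-1)*(1-t)^s)) := by
    intro t ht
    have ht0 := ht.1
    have ht1 := ht.2
    have hτt : τ * t < 1 := by nlinarith
    have hτt0 : 0 ≤ τ * t := by positivity
    have hexp : ∀ k : ℕ, τ^k * (t^(x+(k:ℝ)-1)*(1-t)^s)
        = (t^(x-1)*(1-t)^s) * (τ*t)^k := by
      intro k
      rw [show x+(k:ℝ)-1 = (x-1)+(k:ℝ) by ring, Real.rpow_add ht0, Real.rpow_natCast, mul_pow]
      ring
    have hsumt : Summable (fun k : ℕ => τ^k * (t^(x+(k:ℝ)-1)*(1-t)^s)) := by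
      refine Summable.congr ?_ (fun k => (hexp k).symm)
      exact (summable_geometric_of_lt_one hτt0 hτt).mul_left _
    have htv : ∑' k : ℕ, τ^k * (t^(x+(k:ℝ)-1)*(1-t)^s) = t^(x-1)*(1-t)^s/(1-τ*t) := by
      rw [tsum_congr hexp, tsum_mul_left, tsum_geometric_of_lt_one hτt0 hτt, div_eq_mul_inv]
    rw [← htv, ENNReal.ofReal_tsum_of_nonneg ?_ hsumt]
    intro k
    exact mul_nonneg (pow_nonneg hτ0.le _) (mul_nonneg (Real.rpow_nonneg ht0.le _)
      (Real.rpow_nonneg (by linarith) _))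
  have hofJ : ENNReal.ofReal J = ENNReal.ofReal (∑' k : ℕ, τ^k * I k) := by
    rw [hJdef, MeasureTheory.ofReal_integral_eq_lintegral_ofReal hbig_int
      ((MeasureTheory.ae_restrict_iff' measurableSet_Ioo).mpr (MeasureTheory.ae_of_all _
        (fun t ht => div_nonneg (mul_nonneg (Real.rpow_nonneg ht.1.le _)
          (Real.rpow_nonneg (by linarith [ht.2]) _)) (hd t ht).le))),
      ENNReal.ofReal_tsum_of_nonneg
        (fun k => mul_nonneg (pow_nonneg hτ0.le k) (hInonneg k)) hsum,
      MeasureTheory.setLIntegral_congr_fun measurableSet_Ioo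
        hpoint,
      MeasureTheory.lintegral_tsum
        (fun k => (Measurable.ennreal_ofReal (by fun_prop)).aemeasurable)]
    refine tsum_congr (fun k => ?_)
    rw [← MeasureTheory.ofReal_integral_eq_lintegral_ofReal ((hIint k).const_mul (τ^k))
      ((MeasureTheory.ae_restrict_iff' measurableSet_Ioo).mpr (MeasureTheory.ae_of_all _
        (fun t ht => mul_nonneg (pow_nonneg hτ0.le _)
          (mul_nonneg (Real.rpow_nonneg ht.1.le _)
            (Real.rpow_nonneg (by linarith [ht.2]) _)))))]
    congr 1
    rw [MeasureTheory.integral_const_mul]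
  have hJeq : J = ∑' k : ℕ, τ^k * I k :=
    (ENNReal.ofReal_eq_ofReal_iff hJnn htsum_nonneg).mp hofJ
  -- F = J / I 0
  have hFJ : F = J / I 0 := by
    rw [hF, hJeq, ← tsum_div_const]
    refine tsum_congr (fun k => ?_)
    have hPb : (0:ℝ) < (ascPochhammer ℝ k).eval (x+s+1) := ascPochhammer_pos k _ hb0
    have hPx : (0:ℝ) < (ascPochhammer ℝ k).eval x := ascPochhammer_pos k _ hx0
    have hGxk := Real.Gamma_pos_of_pos (show (0:ℝ) < x + k by positivity)
    have hGbk := Real.Gamma_pos_of_pos (show (0:ℝ) < x + k + s + 1 by positivity)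
    have hratio : I k / I 0
        = (ascPochhammer ℝ k).eval x / (ascPochhammer ℝ k).eval (x+s+1) := by
      rw [hIval k, hI0, gamma_shift hx0 k,
        show x+(k:ℝ)+s+1 = (x+s+1)+(k:ℝ) by ring, gamma_shift hb0 k]
      field_simp
    have hkfac : ((k.factorial : ℝ)) ≠ 0 := by
      exact_mod_cast k.factorial_ne_zero
    rw [hbarg, ascPochhammer_eval_one,
      show τ^k * I k / I 0 = (I k / I 0) * τ^k by ring, hratio]
    field_simp
  -- E = B(x, s)
  set E : ℝ := ∫ t in Set.Ioo (0:ℝ) 1, t^(x-1)*(1-t)^(s-1) with hEdef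
  have hEint : MeasureTheory.IntegrableOn
      (fun t : ℝ => t^(x-1)*(1-t)^(s-1)) (Set.Ioo (0:ℝ) 1) := betaInt_integrableOn hx0 hs0
  have hEval : E = Real.Gamma x * Real.Gamma s / Real.Gamma (x+s) := by
    rw [hEdef]; exact betaInt_eq hx0 hs0
  have hGxs := Real.Gamma_pos_of_pos (show (0:ℝ) < x+s by linarith)
  have hGxs1 : Real.Gamma (x+s+1) = (x+s) * Real.Gamma (x+s) := by
    rw [show x+s+1 = (x+s)+1 by ring]
    exact Real.Gamma_add_one (by linarith)
  have hval0 : ((n:ℝ)+2*s)/(2*s) = (x+s)/s := by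
    rw [hxdef]; field_simp
  have hVal : ((n:ℝ)+2*s)/(2*s) = E / I 0 := by
    rw [hval0, hEval, hI0, hGamma_s1, hGxs1]
    rw [div_eq_div_iff hs0.ne' (by positivity)]
    field_simp
  -- M
  set M : ℝ := ∫ t in Set.Ioo (0:ℝ) 1, t^x * (1-t)^(s-1) / (1-τ*t) with hMdef
  have hMint : MeasureTheory.IntegrableOn
      (fun t : ℝ => t^x * (1-t)^(s-1)/(1-τ*t)) (Set.Ioo (0:ℝ) 1) := by
    have hb2 := (betaInt_integrableOn (show (0:ℝ) < x+1 by linarith) hs0).const_mul (1-τ)⁻¹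
    simp only [add_sub_cancel_right] at hb2
    refine MeasureTheory.Integrable.mono' hb2
      ((by fun_prop : Measurable (fun t : ℝ => t^x*(1-t)^(s-1)/(1-τ*t))).aestronglyMeasurable)
      ((MeasureTheory.ae_restrict_iff' measurableSet_Ioo).mpr (MeasureTheory.ae_of_all _ ?_))
    intro t ht
    have hdt := hd t ht
    have hnum : 0 ≤ t^x*(1-t)^(s-1) :=
      mul_nonneg (Real.rpow_nonneg ht.1.le _) (Real.rpow_nonneg (by linarith [ht.2]) _)
    rw [Real.norm_eq_abs, abs_of_nonneg (div_nonneg hnum hdt.le), inv_mul_eq_div]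
    gcongr <;> nlinarith [ht.1, ht.2, hτ0.le]
  have hMnn : 0 ≤ M := by
    rw [hMdef]
    refine MeasureTheory.setIntegral_nonneg measurableSet_Ioo (fun t ht => ?_)
    exact div_nonneg (mul_nonneg (Real.rpow_nonneg ht.1.le _)
      (Real.rpow_nonneg (by linarith [ht.2]) _)) (hd t ht).le
  -- E - J = (1-τ) M
  have hEJ : E - J = (1-τ) * M := by
    rw [hEdef, hJdef, ← MeasureTheory.integral_sub hEint hbig_int, hMdef,
      ← MeasureTheory.integral_const_mul]
    refine MeasureTheory.setIntegral_congr_fun measurableSet_Ioo (fun t ht => ?_)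
    have ht0 := ht.1
    have ht1 := ht.2
    have hdt := hd t ht
    have h1t : (0:ℝ) < 1 - t := by linarith
    have e1 : (1-t)^s = (1-t)^(s-1)*(1-t) := by
      rw [← Real.rpow_add_one h1t.ne' (s-1)]; norm_num
    have e2 : t^x = t^(x-1)*t := by
      rw [← Real.rpow_add_one ht0.ne' (x-1)]; norm_num
    rw [e1, e2]
    field_simp
    have hdt' : (1:ℝ) - t*τ ≠ 0 := by linarith [mul_comm t τ]
    field_simp
    ring
  -- bound on M
  have hMb : M ≤ Real.Gamma s * Real.Gamma (1-s) * (1-τ)^(s-1) * τ^(-s) := by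
    have h5 : ENNReal.ofReal M
        = ∫⁻ t in Set.Ioo (0:ℝ) 1, ENNReal.ofReal (t^x*(1-t)^(s-1)/(1-τ*t)) := by
      rw [hMdef]
      exact MeasureTheory.ofReal_integral_eq_lintegral_ofReal hMint
        ((MeasureTheory.ae_restrict_iff' measurableSet_Ioo).mpr (MeasureTheory.ae_of_all _
          (fun t ht => div_nonneg (mul_nonneg (Real.rpow_nonneg ht.1.le _)
            (Real.rpow_nonneg (by linarith [ht.2]) _)) (hd t ht).le)))
    have h6 : (∫⁻ t in Set.Ioo (0:ℝ) 1, ENNReal.ofReal (t^x*(1-t)^(s-1)/(1-τ*t)))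
        ≤ ∫⁻ t in Set.Ioo (0:ℝ) 1, ENNReal.ofReal ((1-t)^(s-1)/((1-τ)+τ*(1-t))) := by
      refine MeasureTheory.lintegral_mono_ae
        ((MeasureTheory.ae_restrict_iff' measurableSet_Ioo).mpr
          (MeasureTheory.ae_of_all _ (fun t ht => ?_)))
      refine ENNReal.ofReal_le_ofReal ?_
      rw [show (1-τ)+τ*(1-t) = 1-τ*t by ring]
      have hdt := hd t ht
      have h1 : t^x ≤ 1 := Real.rpow_le_one ht.1.le ht.2.le hx0.le
      have h2 : (0:ℝ) ≤ (1-t)^(s-1) := Real.rpow_nonneg (by linarith [ht.2]) _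
      calc t^x*(1-t)^(s-1)/(1-τ*t) ≤ 1*(1-t)^(s-1)/(1-τ*t) :=
            (div_le_div_iff_of_pos_right hdt).mpr (mul_le_mul_of_nonneg_right h1 h2)
        _ = (1-t)^(s-1)/(1-τ*t) := by rw [one_mul]
    have h7 : (∫⁻ t in Set.Ioo (0:ℝ) 1, ENNReal.ofReal ((1-t)^(s-1)/((1-τ)+τ*(1-t))))
        = ∫⁻ u in Set.Ioo (0:ℝ) 1, ENNReal.ofReal (u^(s-1)/((1-τ)+τ*u)) :=
      lint_reflect (fun u => ENNReal.ofReal (u^(s-1)/((1-τ)+τ*u)))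
    have h8 : (∫⁻ u in Set.Ioo (0:ℝ) 1, ENNReal.ofReal (u^(s-1)/((1-τ)+τ*u)))
        ≤ ∫⁻ u in Set.Ioi (0:ℝ), ENNReal.ofReal (u^(s-1)/((1-τ)+τ*u)) :=
      MeasureTheory.lintegral_mono_set Set.Ioo_subset_Ioi_self
    have h9 := lintA hs0 hs1 h1τ hτ0
    have h10 : ENNReal.ofReal M
        ≤ ENNReal.ofReal (Real.Gamma s * Real.Gamma (1-s) * (1-τ)^(s-1) * τ^(-s)) := by
      rw [h5, ← h9]
      exact le_trans h6 (le_trans (le_of_eq h7) h8)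
    exact (ENNReal.ofReal_le_ofReal_iff (by positivity)).mp h10
  -- assembly
  have ha0 : 0 < a := by
    rw [ha, hbarg]; positivity
  have hDF : ((n:ℝ)+2*s)/(2*s) - F = (1-τ) * M / I 0 := by
    rw [hVal, hFJ, div_sub_div_same, hEJ]
  rw [hK, hDF, hparg]
  have key : a * (Real.Gamma s * Real.Gamma (1-s)) / I 0 = 1 := by
    rw [ha, hbarg, hI0, hGamma_s1]
    field_simp
  have r1 : (1-τ)^(-s) * (1-τ) * (1-τ)^(s-1) = 1 := by
    rw [show (1-τ)^(-s) * (1-τ) * (1-τ)^(s-1) = (1-τ)^(-s) * (1-τ)^(s-1) * (1-τ) by ring,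
      ← Real.rpow_add h1τ, show -s+(s-1) = -(1:ℝ) by ring, Real.rpow_neg_one]
    exact inv_mul_cancel₀ h1τ.ne'
  have r2 : τ^(x+s) * τ^(-s) = τ^x := by
    rw [← Real.rpow_add hτ0]; ring_nf
  have hCM : a * (1-τ)^(-s) * τ^(x+s) * ((1-τ)*M/I 0)
      ≤ a * (1-τ)^(-s) * τ^(x+s) * (1-τ) / I 0
        * (Real.Gamma s * Real.Gamma (1-s) * (1-τ)^(s-1) * τ^(-s)) := by
    have hC0 : 0 ≤ a * (1-τ)^(-s) * τ^(x+s) * (1-τ) / I 0 := by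
      have h1 : (0:ℝ) < (1-τ)^(-s) := Real.rpow_pos_of_pos h1τ _
      have h2 : (0:ℝ) < τ^(x+s) := Real.rpow_pos_of_pos hτ0 _
      positivity
    calc a * (1-τ)^(-s) * τ^(x+s) * ((1-τ)*M/I 0)
        = a * (1-τ)^(-s) * τ^(x+s) * (1-τ) / I 0 * M := by ring
      _ ≤ _ := mul_le_mul_of_nonneg_left hMb hC0
  have hfin : a * (1-τ)^(-s) * τ^(x+s) * (1-τ) / I 0
      * (Real.Gamma s * Real.Gamma (1-s) * (1-τ)^(s-1) * τ^(-s)) = τ^x := by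
    have expand : a * (1-τ)^(-s) * τ^(x+s) * (1-τ) / I 0
        * (Real.Gamma s * Real.Gamma (1-s) * (1-τ)^(s-1) * τ^(-s))
        = (a * (Real.Gamma s * Real.Gamma (1-s)) / I 0)
          * ((1-τ)^(-s) * (1-τ) * (1-τ)^(s-1)) * (τ^(x+s) * τ^(-s)) := by ring
    rw [expand, key, r1, r2, one_mul, one_mul]
  have hτx : τ^x ≤ 1 := Real.rpow_le_one hτ0.le hτ1.le hx0.le
  have hfinal : a * (1-τ)^(-s) * τ^(x+s) * ((1-τ)*M/I 0) ≤ τ^x := by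
    rw [← hfin]; exact hCM
  linarith
end
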